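/- arXiv:1801.07996 — 3 statements merged into one kernel-verified Lean document; each statement's English description precedes it below -/
import Mathlib

section
/- For two non-antipodal points p, q on the unit sphere S^{n+1}, the map τ_p^q : v ↦ v − (⟨v, q⟩/(1 + ⟨q, p⟩))(q + p) from the tangent space at p to the tangent space at q is a linear isometry, and its composition with τ_q^p (defined symmetrically) is the identity on the tangent space at p. -/
/-! For unit vectors p, q, both ⟪q + p, q⟫ and ‖q + p‖² / 2 equal 1 + ⟪q, p⟫. The first makes
⟪τ v, q⟫ vanish for every v; the second makes the cross term and the square term in ‖τ v‖²
cancel when v ⊥ p. Inverting on T_pS uses ⟪τ v, p⟫ = -⟪v, q⟫ there. -/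

open scoped RealInnerProductSpace

section

variable {E : Type*} [NormedAddCommGroup E] [InnerProductSpace ℝ E]

noncomputable def sphereTransport (p q : E) : E →ₗ[ℝ] E where
  toFun v := v - (⟪v, q⟫ / (1 + ⟪q, p⟫)) • (q + p)
  map_add' v w := by
    simp only [inner_add_left, add_div, add_smul]
    abel
  map_smul' a v := by
    simp only [real_inner_smul_left, mul_div_assoc, mul_smul, smul_sub, RingHom.id_apply]

variable {p q : E}

theorem sphereTransport_apply (v : E) :
    sphereTransport p q v = v - (⟪v, q⟫ / (1 + ⟪q, p⟫)) • (q + p) := rfl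

theorem inner_sphereTransport_target (hq : ‖q‖ = 1) (hpq : 1 + ⟪q, p⟫ ≠ 0) (v : E) :
    ⟪sphereTransport p q v, q⟫ = 0 := by
  rw [sphereTransport_apply, inner_sub_left, real_inner_smul_left, inner_add_left,
    real_inner_self_eq_norm_sq, hq, real_inner_comm q p]
  field_simp
  ring

theorem inner_sphereTransport_source (hp : ‖p‖ = 1) (hpq : 1 + ⟪q, p⟫ ≠ 0) (v : E) :
    ⟪sphereTransport p q v, p⟫ = ⟪v, p⟫ - ⟪v, q⟫ := by
  rw [sphereTransport_apply, inner_sub_left, real_inner_smul_left, inner_add_left,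
    real_inner_self_eq_norm_sq, hp]
  field_simp
  ring

theorem norm_sphereTransport (hp : ‖p‖ = 1) (hq : ‖q‖ = 1) (hpq : 1 + ⟪q, p⟫ ≠ 0) {v : E}
    (hv : ⟪v, p⟫ = 0) : ‖sphereTransport p q v‖ = ‖v‖ := by
  have hqp : ‖q + p‖ ^ 2 = 2 * (1 + ⟪q, p⟫) := by
    rw [norm_add_sq_real, hp, hq]; ring
  have hvqp : ⟪v, q + p⟫ = ⟪v, q⟫ := by rw [inner_add_right, hv, add_zero]
  suffices ‖sphereTransport p q v‖ ^ 2 = ‖v‖ ^ 2 by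
    simpa using congrArg Real.sqrt this
  rw [sphereTransport_apply, norm_sub_sq_real, norm_smul, mul_pow, Real.norm_eq_abs, sq_abs,
    hqp, real_inner_smul_right, hvqp]
  field_simp
  ring

theorem sphereTransport_symm_apply (hp : ‖p‖ = 1) (hpq : 1 + ⟪q, p⟫ ≠ 0) {v : E}
    (hv : ⟪v, p⟫ = 0) : sphereTransport q p (sphereTransport p q v) = v := by
  rw [sphereTransport_apply (p := q), inner_sphereTransport_source hp hpq, hv, zero_sub,
    real_inner_comm q p, add_comm p q, neg_div, neg_smul, sphereTransport_apply, sub_neg_eq_add,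
    sub_add_cancel]

end

theorem parallel_transport_linear_isometry_and_inverse
    {n : ℕ} (p q : EuclideanSpace ℝ (Fin (n + 2)))
    (hp : ‖p‖ = 1) (hq : ‖q‖ = 1) (hpq : ⟪p, q⟫ ≠ -1) :
    -- τ_p^q and τ_q^p
    (fun τpq τqp =>
      -- τ_p^q maps T_pS into T_qS
      (∀ v : EuclideanSpace ℝ (Fin (n + 2)), ⟪v, p⟫ = 0 → ⟪τpq v, q⟫ = 0) ∧
      -- linearity
      (∀ v w : EuclideanSpace ℝ (Fin (n + 2)), τpq (v + w) = τpq v + τpq w) ∧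
      (∀ (a : ℝ) (v : EuclideanSpace ℝ (Fin (n + 2))), τpq (a • v) = a • τpq v) ∧
      -- isometry
      (∀ v : EuclideanSpace ℝ (Fin (n + 2)), ⟪v, p⟫ = 0 → ‖τpq v‖ = ‖v‖) ∧
      -- τ_q^p ∘ τ_p^q is the identity on T_pS
      (∀ v : EuclideanSpace ℝ (Fin (n + 2)), ⟪v, p⟫ = 0 → τqp (τpq v) = v))
    (fun v => v - (⟪v, q⟫ / (1 + ⟪q, p⟫)) • (q + p))
    (fun v => v - (⟪v, p⟫ / (1 + ⟪p, q⟫)) • (p + q)) := by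
  have hqp : 1 + ⟪q, p⟫ ≠ 0 := by
    rw [real_inner_comm]
    contrapose! hpq
    linarith
  exact ⟨fun v _ => inner_sphereTransport_target hq hqp v, map_add (sphereTransport p q),
    map_smul (sphereTransport p q), fun _ hv => norm_sphereTransport hp hq hqp hv,
    fun _ hv => sphereTransport_symm_apply hp hqp hv⟩
end

section
/- Let m be a symmetric traceless 3×3 real matrix with tr(m²) = 6. Then −1 ≤ det(m)/2 ≤ 1, with equality det(m)/2 = ±1 attained exactly when the eigenvalues of m are a permutation of (∓1, ∓1, ±2). -/
/-!
The eigenvalues `a, b, c` of `m` satisfy `a + b + c = 0` and `a² + b² + c² = 6`, hence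
`ab + bc + ca = -3`, so each of them is a root of `x³ - 3x - abc`. Since
`x³ - 3x - 2 = (x - 2)(x + 1)²` and every eigenvalue lies in `[-2, 2]`, this gives `abc ≤ 2`,
with equality only if all eigenvalues lie in `{-1, 2}`. Replacing `m` by `-m` gives the lower bound.
-/

open Matrix

section Trace

variable {n 𝕜 : Type*} [Fintype n] [DecidableEq n] [RCLike 𝕜]

theorem Matrix.trace_conjStarAlgAut (U : unitary (Matrix n n 𝕜)) (A : Matrix n n 𝕜) :
    (Unitary.conjStarAlgAut 𝕜 _ U A).trace = A.trace := by
  rw [Unitary.conjStarAlgAut_apply, trace_mul_cycle, Unitary.coe_star_mul_self, one_mul]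

theorem Matrix.IsHermitian.trace_mul_self_eq_sum_sq_eigenvalues {A : Matrix n n 𝕜}
    (hA : A.IsHermitian) : (A * A).trace = ∑ i, (hA.eigenvalues i : 𝕜) ^ 2 := by
  conv_lhs => rw [hA.spectral_theorem, ← map_mul, trace_conjStarAlgAut, diagonal_mul_diagonal]
  simp [trace_diagonal, sq]

end Trace

section ThreeReals

variable {a b c : ℝ}

theorem sq_le_four_of_add_add_eq_zero (h₁ : a + b + c = 0) (h₂ : a ^ 2 + b ^ 2 + c ^ 2 = 6) :
    a ^ 2 ≤ 4 := by
  obtain rfl : c = -a - b := by linarith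
  nlinarith [sq_nonneg (a + 2 * b)]

theorem mul_mul_sub_two_eq (h₁ : a + b + c = 0) (h₂ : a ^ 2 + b ^ 2 + c ^ 2 = 6) :
    a * b * c - 2 = (a - 2) * (a + 1) ^ 2 := by
  linear_combination (-a ^ 2 + a / 2 * (a + b + c)) * h₁ - a / 2 * h₂

theorem mul_mul_le_two_of_add_add_eq_zero (h₁ : a + b + c = 0)
    (h₂ : a ^ 2 + b ^ 2 + c ^ 2 = 6) : a * b * c ≤ 2 := by
  have ha : a ≤ 2 := by nlinarith [sq_le_four_of_add_add_eq_zero h₁ h₂]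
  nlinarith [mul_mul_sub_two_eq h₁ h₂, sq_nonneg (a + 1)]

theorem eq_neg_one_or_eq_two_of_mul_mul_eq_two (h₁ : a + b + c = 0)
    (h₂ : a ^ 2 + b ^ 2 + c ^ 2 = 6) (h₃ : a * b * c = 2) : a = -1 ∨ a = 2 := by
  have h := mul_mul_sub_two_eq h₁ h₂
  rw [h₃, sub_self, eq_comm, mul_eq_zero, pow_eq_zero_iff two_ne_zero] at h
  rcases h with h | h
  · exact .inr (by linarith)
  · exact .inl (by linarith)

end ThreeReals

section FinThree

theorem exists_perm_comp_eq_of_forall_eq_neg_one_or_eq_two {f : Fin 3 → ℝ}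
    (hsum : ∑ i, f i = 0) (hf : ∀ i, f i = -1 ∨ f i = 2) :
    ∃ σ : Equiv.Perm (Fin 3), f ∘ σ = ![-1, -1, 2] := by
  rw [Fin.sum_univ_three] at hsum
  rcases hf 0 with h₀ | h₀ <;> rcases hf 1 with h₁ | h₁ <;> rcases hf 2 with h₂ | h₂ <;>
    try (exfalso; linarith)
  · exact ⟨1, by ext i; fin_cases i <;> simp [h₀, h₁, h₂]⟩
  · exact ⟨Equiv.swap 1 2, by
      ext i; fin_cases i <;> simp [Equiv.swap_apply_def, h₀, h₁, h₂]⟩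
  · exact ⟨Equiv.swap 0 2, by
      ext i; fin_cases i <;> simp [Equiv.swap_apply_def, h₀, h₁, h₂]⟩

variable {f : Fin 3 → ℝ} (hsum : ∑ i, f i = 0) (hsq : ∑ i, f i ^ 2 = 6)
include hsum hsq

theorem prod_le_two_of_sum_eq_zero : ∏ i, f i ≤ 2 := by
  rw [Fin.sum_univ_three] at hsum hsq
  rw [Fin.prod_univ_three]
  exact mul_mul_le_two_of_add_add_eq_zero hsum hsq

theorem prod_eq_two_iff_of_sum_eq_zero :
    ∏ i, f i = 2 ↔ ∃ σ : Equiv.Perm (Fin 3), f ∘ σ = ![-1, -1, 2] := by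
  constructor
  · intro hprod
    refine exists_perm_comp_eq_of_forall_eq_neg_one_or_eq_two hsum ?_
    rw [Fin.sum_univ_three] at hsum hsq
    rw [Fin.prod_univ_three] at hprod
    have h₀ := eq_neg_one_or_eq_two_of_mul_mul_eq_two hsum hsq hprod
    have h₁ := eq_neg_one_or_eq_two_of_mul_mul_eq_two (a := f 1) (b := f 0) (c := f 2)
      (by linarith) (by linarith) (by linarith)
    have h₂ := eq_neg_one_or_eq_two_of_mul_mul_eq_two (a := f 2) (b := f 0) (c := f 1)
      (by linarith) (by linarith) (by linarith)
    intro i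
    fin_cases i <;> assumption
  · rintro ⟨σ, hσ⟩
    rw [← Equiv.prod_comp σ, ← Function.comp_def, hσ, Fin.prod_univ_three]
    simp

theorem neg_two_le_prod_of_sum_eq_zero : -2 ≤ ∏ i, f i := by
  have h := prod_le_two_of_sum_eq_zero (f := -f) (by simpa using hsum) (by simpa using hsq)
  norm_num [Finset.prod_neg] at h
  linarith

theorem prod_eq_neg_two_iff_of_sum_eq_zero :
    ∏ i, f i = -2 ↔ ∃ σ : Equiv.Perm (Fin 3), f ∘ σ = ![1, 1, -2] := by
  have h := prod_eq_two_iff_of_sum_eq_zero (f := -f) (by simpa using hsum) (by simpa using hsq)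
  norm_num [Finset.prod_neg, Pi.neg_comp, neg_eq_iff_eq_neg] at h
  exact h

end FinThree

theorem det_bound_traceless_symmetric
    (m : Matrix (Fin 3) (Fin 3) ℝ) (hm : m.IsHermitian)
    (htr : m.trace = 0) (htr2 : (m * m).trace = 6) :
    (-1 ≤ m.det / 2 ∧ m.det / 2 ≤ 1) ∧
      (m.det / 2 = 1 ↔ ∃ σ : Equiv.Perm (Fin 3), hm.eigenvalues ∘ σ = ![-1, -1, 2]) ∧
      (m.det / 2 = -1 ↔ ∃ σ : Equiv.Perm (Fin 3), hm.eigenvalues ∘ σ = ![1, 1, -2]) := by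
  have hsum : ∑ i, hm.eigenvalues i = 0 := by simpa [htr] using hm.trace_eq_sum_eigenvalues.symm
  have hsq : ∑ i, hm.eigenvalues i ^ 2 = 6 := by
    simpa [htr2] using hm.trace_mul_self_eq_sum_sq_eigenvalues.symm
  have hdet : m.det = ∏ i, hm.eigenvalues i := by simpa using hm.det_eq_prod_eigenvalues
  rw [hdet, div_eq_iff two_ne_zero, div_eq_iff two_ne_zero,
    ← prod_eq_two_iff_of_sum_eq_zero hsum hsq, ← prod_eq_neg_two_iff_of_sum_eq_zero hsum hsq]
  have hle := prod_le_two_of_sum_eq_zero hsum hsq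
  have hge := neg_two_le_prod_of_sum_eq_zero hsum hsq
  exact ⟨⟨by linarith, by linarith⟩, by norm_num, by norm_num⟩
end

section
/- For 0 < r < 1 and s = √(1 − r²), the numbers λ₁ = −s/r and λ₂ = r/s satisfy: there exists r ∈ (0,1) and ε ∈ (0, √2 − 1) such that min(|λ₁|, |λ₂|) > ε · tan(R/2) where cos R = min{r, s}, demonstrating that weakening the curvature bound of the sphere rigidity theorem by a factor ε < √2 − 1 admits the non-spherical counterexample S¹(r) × S^{n−1}(s). -/
/-!
Take the Clifford hypersurface `r = s = √2 / 2`. Both principal curvatures then have modulus `1`,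
while `min r s > 0` forces `R = arccos (min r s) < π / 2`, so `tan (R / 2) < tan (π / 4) = 1`.
Hence every `ε ∈ (0, 1)`, in particular `ε = (√2 - 1) / 2`, gives `ε * tan (R / 2) < 1`.
-/

open Real

lemma Real.sqrt_one_sub_sqrt_two_div_two_sq : √(1 - (√2 / 2) ^ 2) = √2 / 2 := by
  rw [← cos_pi_div_four, ← sin_eq_sqrt_one_sub_cos_sq (by positivity) (by linarith [pi_pos]),
    sin_pi_div_four, cos_pi_div_four]

lemma Real.tan_half_arccos_nonneg (x : ℝ) : 0 ≤ tan (arccos x / 2) :=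
  tan_nonneg_of_nonneg_of_le_pi_div_two (by linarith [arccos_nonneg x])
    (by linarith [arccos_le_pi x])

lemma Real.tan_half_arccos_lt_one {x : ℝ} (hx : 0 < x) : tan (arccos x / 2) < 1 := by
  have hR : arccos x < π / 2 := arccos_lt_pi_div_two.mpr hx
  rw [← tan_pi_div_four]
  exact tan_lt_tan_of_lt_of_lt_pi_div_two (by linarith [arccos_nonneg x, pi_pos])
    (by linarith [pi_pos]) (by linarith)

theorem clifford_counterexample_to_weakened_bound :
    ∃ r : ℝ, 0 < r ∧ r < 1 ∧
      ∃ ε : ℝ, 0 < ε ∧ ε < Real.sqrt 2 - 1 ∧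
        min (Real.sqrt (1 - r ^ 2) / r) (r / Real.sqrt (1 - r ^ 2)) >
          ε * Real.tan (Real.arccos (min r (Real.sqrt (1 - r ^ 2))) / 2) := by
  have hr : 0 < √2 / 2 := by positivity
  have hsqrt : 1 < √2 ∧ √2 < 2 := ⟨one_lt_sqrt_two, by rw [sqrt_lt' two_pos]; norm_num⟩
  refine ⟨√2 / 2, hr, by linarith, (√2 - 1) / 2, by linarith, by linarith, ?_⟩
  rw [sqrt_one_sub_sqrt_two_div_two_sq, div_self hr.ne', min_self, min_self]
  have htan := tan_half_arccos_lt_one hr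
  have htan₀ := tan_half_arccos_nonneg (√2 / 2)
  nlinarith
end
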